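/- arXiv:quant-ph/0202001 — 5 statements merged into one kernel-verified Lean document; each statement's English description precedes it below -/
import Mathlib

section
/- Let a = (a_1,…,a_d) be a probability vector on {1,…,d} with a_i > 0 for all i, and let (n_1,…,n_d) ∈ ℕ^d with ∑_{i=1}^d n_i = n and n ≥ 1. Then the multinomial probability satisfies (n!/(n_1! ⋯ n_d!)) · ∏_{i=1}^d a_i^{n_i} ≤ exp(−n · D((n_1/n,…,n_d/n) ‖ a)). -/
/-- Key combinatorial bound: `multinomial f * ∏ f i ^ f i ≤ n ^ n` when `∑ f i = n`. -/
lemma multinomial_mul_prod_pow_le (d n : ℕ) (f : Fin d → ℕ) (hf : ∑ i, f i = n) :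
    Nat.multinomial Finset.univ f * ∏ i, f i ^ f i ≤ n ^ n := by
  have h := Finset.sum_pow_eq_sum_piAntidiag (Finset.univ : Finset (Fin d)) f n
  rw [hf] at h
  rw [h]
  refine Finset.single_le_sum (f := fun k => Nat.multinomial Finset.univ k * ∏ i, f i ^ k i)
    (fun k _ => Nat.zero_le _) ?_
  simp [Finset.mem_piAntidiag, hf]

/-- For a strictly positive probability vector `a` on `{1,…,d}` and a tuple
`(n_1,…,n_d) ∈ ℕ^d` with `∑ i, n_i = n ≥ 1`, the multinomial probability satisfies
`(n!/(n_1!⋯n_d!)) ∏ a_i^{n_i} ≤ exp (−n · D((n_1/n,…,n_d/n) ‖ a))`, where `D` is the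
Kullback–Leibler divergence (natural logarithm, convention `0 log 0 = 0`). -/
theorem multinomial_prob_le_exp_neg_KL (d n : ℕ) (hn : 1 ≤ n)
    (a : Fin d → ℝ) (ha : ∀ i, 0 < a i) (hsa : ∑ i, a i = 1)
    (f : Fin d → ℕ) (hf : ∑ i, f i = n) :
    (Nat.multinomial Finset.univ f : ℝ) * ∏ i, a i ^ f i ≤
      Real.exp (-(n : ℝ) *
        ∑ i, ((f i : ℝ) / n) * Real.log (((f i : ℝ) / n) / a i)) := by
  have hn0 : (0:ℝ) < n := by exact_mod_cast hn
  -- rewrite the RHS as a product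
  have hRHS : Real.exp (-(n : ℝ) *
      ∑ i, ((f i : ℝ) / n) * Real.log (((f i : ℝ) / n) / a i)) =
      ∏ i, (a i * n / f i) ^ f i := by
    rw [Finset.mul_sum, Real.exp_sum]
    refine Finset.prod_congr rfl fun i _ => ?_
    rcases Nat.eq_zero_or_pos (f i) with h0 | hpos
    · simp [h0]
    · have hfi : (0:ℝ) < f i := by exact_mod_cast hpos
      have hx : ((f i : ℝ) / n) / a i = (a i * n / f i)⁻¹ := by
        field_simp
      have h1 : -(n:ℝ) * (((f i : ℝ) / n) * Real.log (((f i : ℝ) / n) / a i)) =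
          (f i : ℝ) * Real.log (a i * n / f i) := by
        rw [hx, Real.log_inv]
        field_simp
      rw [h1, Real.exp_nat_mul, Real.exp_log (div_pos (mul_pos (ha i) hn0) hfi)]
  rw [hRHS]
  -- reduce to the combinatorial bound
  have key : (Nat.multinomial Finset.univ f : ℝ) * ∏ i, (f i : ℝ) ^ f i ≤ (n:ℝ) ^ n := by
    have := multinomial_mul_prod_pow_le d n f hf
    exact_mod_cast this
  have hprod : ∏ i, (a i * n / f i) ^ f i =
      (∏ i, a i ^ f i) * ((n:ℝ) ^ n / ∏ i, (f i : ℝ) ^ f i) := by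
    have hnn : (n:ℝ) ^ n = ∏ i, (n:ℝ) ^ f i := by
      rw [Finset.prod_pow_eq_pow_sum, hf]
    rw [hnn, ← Finset.prod_div_distrib, ← Finset.prod_mul_distrib]
    refine Finset.prod_congr rfl fun i _ => ?_
    rcases Nat.eq_zero_or_pos (f i) with h0 | hpos
    · simp [h0]
    · have hfi : (0:ℝ) < f i := by exact_mod_cast hpos
      rw [div_pow, mul_pow, mul_div_assoc]
  rw [hprod]
  have hfpos : (0:ℝ) < ∏ i, (f i : ℝ) ^ f i := by
    apply Finset.prod_pos
    intro i _
    rcases Nat.eq_zero_or_pos (f i) with h0 | hpos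
    · simp [h0]
    · have : (0:ℝ) < f i := by exact_mod_cast hpos
      positivity
  have hap : (0:ℝ) < ∏ i, a i ^ f i := Finset.prod_pos fun i _ => pow_pos (ha i) _
  rw [mul_comm (Nat.multinomial Finset.univ f : ℝ)]
  apply mul_le_mul_of_nonneg_left ?_ hap.le
  rw [le_div_iff₀ hfpos]
  exact key
end

section
/- (Monotonicity of quantum relative entropy under a two-outcome measurement.) Let ρ and σ be positive definite density matrices on ℂ^d and let T be a Hermitian d×d matrix with 0 ≤ T ≤ I, such that 0 < Tr(ρT) < 1 and 0 < Tr(σT) < 1. Then d(Tr(ρT), Tr(σT)) ≤ D(ρ‖σ), where d(α,β) := α log(α/β) + (1−α) log((1−α)/(1−β)) is the binary Kullback–Leibler divergence. -/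
open scoped Matrix ComplexOrder
open Filter intervalIntegral
set_option maxHeartbeats 1000000

/-- The matrix logarithm of a Hermitian matrix, via the continuous functional calculus
(the real logarithm is applied to the eigenvalues).  On non-Hermitian matrices the value
is irrelevant (`0`). -/
noncomputable def matLog {ι : Type*} [Fintype ι] [DecidableEq ι]
    (A : Matrix ι ι ℂ) : Matrix ι ι ℂ :=
  if hA : A.IsHermitian then
    (hA.eigenvectorUnitary : Matrix ι ι ℂ) *
      Matrix.diagonal (fun i => (Real.log (hA.eigenvalues i) : ℂ)) *
      star (hA.eigenvectorUnitary : Matrix ι ι ℂ)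
  else 0

/-- The quantum relative entropy `D(ρ‖σ) = Tr ρ (log ρ − log σ)`. -/
noncomputable def qRelEnt {ι : Type*} [Fintype ι] [DecidableEq ι]
    (ρ σ : Matrix ι ι ℂ) : ℝ :=
  ((ρ * (matLog ρ - matLog σ)).trace).re

/-- The binary Kullback–Leibler divergence
`d(α,β) = α log(α/β) + (1−α) log((1−α)/(1−β))`. -/
noncomputable def binKL (α β : ℝ) : ℝ :=
  α * Real.log (α / β) + (1 - α) * Real.log ((1 - α) / (1 - β))

lemma hasDeriv_aux (x y : ℝ) (hx : 0 < x) (hy : 0 < y) {s : ℝ} (hs : 0 ≤ s) :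
    HasDerivAt (fun s => x * Real.log (y + s*x) - x * Real.log (1+s))
      (x^2/(y+s*x) - x/(1+s)) s := by
  have h1 : (0:ℝ) < y + s*x := by positivity
  have h2 : (0:ℝ) < 1 + s := by positivity
  have d1 : HasDerivAt (fun s : ℝ => y + s*x) x s := by
    simpa using ((hasDerivAt_id s).mul_const x).const_add y
  have d2 : HasDerivAt (fun s : ℝ => 1 + s) 1 s := by
    simpa using (hasDerivAt_id s).const_add (1:ℝ)
  have l1 : HasDerivAt (fun s : ℝ => Real.log (y + s*x)) (x / (y + s*x)) s := by
    have := (Real.hasDerivAt_log h1.ne').comp s d1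
    exact d1.log h1.ne'
  have l2 : HasDerivAt (fun s : ℝ => Real.log (1 + s)) (1 / (1+s)) s := by
    exact d2.log h2.ne'
  have := (l1.const_mul x).sub (l2.const_mul x)
  refine this.congr_deriv ?_
  rw [div_eq_mul_inv, div_eq_mul_inv, pow_two]
  ring

lemma contOn_aux (x y M : ℝ) (hx : 0 < x) (hy : 0 < y) (hM : 0 ≤ M) :
    ContinuousOn (fun s : ℝ => x^2/(y+s*x) - x/(1+s)) (Set.uIcc 0 M) := by
  rw [Set.uIcc_of_le hM]
  apply ContinuousOn.sub
  · exact ContinuousOn.div continuousOn_const (by fun_prop) (fun s hs => by nlinarith [hs.1])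
  · exact ContinuousOn.div continuousOn_const (by fun_prop) (fun s hs => by nlinarith [hs.1])

lemma integrable_aux (x y M : ℝ) (hx : 0 < x) (hy : 0 < y) (hM : 0 ≤ M) :
    IntervalIntegrable (fun s : ℝ => x^2/(y+s*x) - x/(1+s)) MeasureTheory.volume 0 M :=
  (contOn_aux x y M hx hy hM).intervalIntegrable

lemma integral_aux (x y M : ℝ) (hx : 0 < x) (hy : 0 < y) (hM : 0 ≤ M) :
    ∫ s in (0:ℝ)..M, (x^2/(y+s*x) - x/(1+s)) =
      x * Real.log (y + M*x) - x * Real.log (1+M) - x * Real.log y := by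
  have hicc : Set.uIcc (0:ℝ) M = Set.Icc 0 M := Set.uIcc_of_le hM
  have := integral_eq_sub_of_hasDerivAt (f := fun s => x * Real.log (y + s*x) - x * Real.log (1+s))
    (f' := fun s => x^2/(y+s*x) - x/(1+s)) (a := 0) (b := M)
    (fun s hs => by
      rw [hicc] at hs
      exact hasDeriv_aux x y hx hy hs.1)
    (integrable_aux x y M hx hy hM)
  rw [this]
  simp only [zero_mul, add_zero, mul_zero]
  rw [Real.log_one]
  ring

lemma tendsto_aux (x y : ℝ) (hx : 0 < x) (hy : 0 < y) :
    Tendsto (fun M : ℝ => x * Real.log (y + M*x) - x * Real.log (1+M)) atTop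
      (nhds (x * Real.log x)) := by
  have key : Tendsto (fun M : ℝ => (y + M*x)/(1+M)) atTop (nhds x) := by
    have h1 : Tendsto (fun M : ℝ => (y * M⁻¹ + x)/(M⁻¹ + 1)) atTop (nhds x) := by
      have hz : Tendsto (fun M : ℝ => M⁻¹) atTop (nhds 0) := tendsto_inv_atTop_zero
      have hnum : Tendsto (fun M : ℝ => y * M⁻¹ + x) atTop (nhds x) := by
        simpa using (hz.const_mul y).add_const x
      have hden : Tendsto (fun M : ℝ => M⁻¹ + 1) atTop (nhds 1) := by
        simpa using hz.add_const 1
      have := hnum.div hden one_ne_zero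
      rw [div_one] at this
      exact this
    refine h1.congr' ?_
    filter_upwards [eventually_gt_atTop (0:ℝ)] with M hM
    field_simp
  have hlog : Tendsto (fun M : ℝ => Real.log ((y + M*x)/(1+M))) atTop (nhds (Real.log x)) :=
    (Real.continuousAt_log hx.ne').tendsto.comp key
  have : Tendsto (fun M : ℝ => x * Real.log ((y + M*x)/(1+M))) atTop (nhds (x * Real.log x)) :=
    hlog.const_mul x
  refine this.congr' ?_
  filter_upwards [eventually_gt_atTop (0:ℝ)] with M hM
  rw [Real.log_div (by positivity) (by positivity)]
  ring

lemma scalar_main {n : ℕ} (P Q : Fin n → ℝ) (w : Fin n → Fin n → ℝ) (α β : ℝ)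
    (hP : ∀ i, 0 < P i) (hQ : ∀ j, 0 < Q j) (hw : ∀ i j, 0 ≤ w i j)
    (hsum : ∑ i, ∑ j, w i j * P i = 1)
    (hα0 : 0 < α) (hα1 : α < 1) (hβ0 : 0 < β) (hβ1 : β < 1)
    (key : ∀ s : ℝ, 0 ≤ s →
      α^2/(β+s*α) + (1-α)^2/((1-β)+s*(1-α)) ≤ ∑ i, ∑ j, w i j * ((P i)^2 / (Q j + s * P i))) :
    binKL α β ≤ ∑ i, ∑ j, w i j * (P i * Real.log (P i) - P i * Real.log (Q j)) := by
  have hα1' : 0 < 1 - α := by linarith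
  have hβ1' : 0 < 1 - β := by linarith
  set D : ℝ := ∑ i, ∑ j, w i j * (P i * Real.log (P i) - P i * Real.log (Q j)) with hD
  set F : ℝ → ℝ := fun M =>
    (∑ i, ∑ j, w i j * (P i * Real.log (Q j + M * P i) - P i * Real.log (1+M)
        - P i * Real.log (Q j)))
    - (α * Real.log (β + M*α) - α * Real.log (1+M) - α * Real.log β)
    - ((1-α) * Real.log ((1-β) + M*(1-α)) - (1-α) * Real.log (1+M)
        - (1-α) * Real.log (1-β)) with hF
  have step1 : ∀ M : ℝ, 0 ≤ M → 0 ≤ F M := by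
    intro M hM
    have hFeq : F M = ∫ s in (0:ℝ)..M,
        ((∑ i, ∑ j, w i j * ((P i)^2/(Q j + s*(P i)) - (P i)/(1+s)))
          - (α^2/(β+s*α) - α/(1+s))
          - ((1-α)^2/((1-β)+s*(1-α)) - (1-α)/(1+s))) := by
      have hIsum : ∀ i j : Fin n, IntervalIntegrable
          (fun s : ℝ => w i j * ((P i)^2/(Q j + s*(P i)) - (P i)/(1+s)))
          MeasureTheory.volume 0 M :=
        fun i j => (integrable_aux (P i) (Q j) M (hP i) (hQ j) hM).const_mul (w i j)
      have hIsum2 : IntervalIntegrable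
          (fun s : ℝ => ∑ i, ∑ j, w i j * ((P i)^2/(Q j + s*(P i)) - (P i)/(1+s)))
          MeasureTheory.volume 0 M := by
        apply ContinuousOn.intervalIntegrable
        refine continuousOn_finset_sum _ (fun i _ => continuousOn_finset_sum _ (fun j _ => ?_))
        exact continuousOn_const.mul (contOn_aux (P i) (Q j) M (hP i) (hQ j) hM)
      rw [intervalIntegral.integral_sub (hIsum2.sub (integrable_aux α β M hα0 hβ0 hM))
            (integrable_aux (1-α) (1-β) M hα1' hβ1' hM),
          intervalIntegral.integral_sub hIsum2 (integrable_aux α β M hα0 hβ0 hM)]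
      rw [intervalIntegral.integral_finset_sum
            (fun i (_ : i ∈ Finset.univ) => (by
              apply ContinuousOn.intervalIntegrable
              refine continuousOn_finset_sum _ (fun j _ => ?_)
              exact continuousOn_const.mul (contOn_aux (P i) (Q j) M (hP i) (hQ j) hM) :
              IntervalIntegrable (fun s : ℝ => ∑ j, w i j * ((P i)^2/(Q j + s*(P i)) - (P i)/(1+s)))
                MeasureTheory.volume 0 M))]
      have : ∀ i : Fin n, (∫ s in (0:ℝ)..M, ∑ j, w i j * ((P i)^2/(Q j + s*(P i)) - (P i)/(1+s)))
          = ∑ j, w i j * (P i * Real.log (Q j + M * P i) - P i * Real.log (1+M)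
              - P i * Real.log (Q j)) := by
        intro i
        rw [intervalIntegral.integral_finset_sum (fun j (_ : j ∈ Finset.univ) => hIsum i j)]
        refine Finset.sum_congr rfl (fun j _ => ?_)
        rw [intervalIntegral.integral_const_mul, integral_aux (P i) (Q j) M (hP i) (hQ j) hM]
      simp_rw [this]
      rw [integral_aux α β M hα0 hβ0 hM, integral_aux (1-α) (1-β) M hα1' hβ1' hM]
    rw [hFeq]
    apply intervalIntegral.integral_nonneg hM
    intro u hu
    have hu0 : 0 ≤ u := hu.1
    have hkey := key u hu0
    have hsplit : (∑ i, ∑ j, w i j * ((P i)^2/(Q j + u*(P i)) - (P i)/(1+u)))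
        = (∑ i, ∑ j, w i j * ((P i)^2/(Q j + u*(P i)))) - 1/(1+u) := by
      have h1u : (0:ℝ) < 1 + u := by linarith
      have : (∑ i, ∑ j, w i j * ((P i)^2/(Q j + u*(P i)) - (P i)/(1+u)))
          = (∑ i, ∑ j, w i j * ((P i)^2/(Q j + u*(P i))))
            - (∑ i, ∑ j, w i j * (P i)) / (1+u) := by
        rw [Finset.sum_div, ← Finset.sum_sub_distrib]
        refine Finset.sum_congr rfl (fun i _ => ?_)
        rw [Finset.sum_div, ← Finset.sum_sub_distrib]
        refine Finset.sum_congr rfl (fun j _ => ?_)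
        field_simp
      rw [this, hsum]
    rw [hsplit]
    have h1u : (0:ℝ) < 1 + u := by linarith
    have e1 : α^2/(β+u*α) - α/(1+u) + ((1-α)^2/((1-β)+u*(1-α)) - (1-α)/(1+u))
        = α^2/(β+u*α) + (1-α)^2/((1-β)+u*(1-α)) - 1/(1+u) := by
      field_simp
      ring
    linarith [hkey]
  have step2 : Tendsto F atTop (nhds (D - binKL α β)) := by
    have hterm : ∀ i j : Fin n, Tendsto (fun M : ℝ =>
        w i j * (P i * Real.log (Q j + M * P i) - P i * Real.log (1+M) - P i * Real.log (Q j)))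
        atTop (nhds (w i j * (P i * Real.log (P i) - P i * Real.log (Q j)))) := by
      intro i j
      exact (((tendsto_aux (P i) (Q j) (hP i) (hQ j)).sub_const
        (P i * Real.log (Q j))).const_mul (w i j))
    have hsum1 : Tendsto (fun M : ℝ => ∑ i, ∑ j,
        w i j * (P i * Real.log (Q j + M * P i) - P i * Real.log (1+M) - P i * Real.log (Q j)))
        atTop (nhds D) := by
      rw [hD]
      exact tendsto_finset_sum _ (fun i _ => tendsto_finset_sum _ (fun j _ => hterm i j))
    have hα' : Tendsto (fun M : ℝ => α * Real.log (β + M*α) - α * Real.log (1+M)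
        - α * Real.log β) atTop (nhds (α * Real.log α - α * Real.log β)) :=
      (tendsto_aux α β hα0 hβ0).sub_const (α * Real.log β)
    have hβ' : Tendsto (fun M : ℝ => (1-α) * Real.log ((1-β) + M*(1-α))
        - (1-α) * Real.log (1+M) - (1-α) * Real.log (1-β)) atTop
        (nhds ((1-α) * Real.log (1-α) - (1-α) * Real.log (1-β))) :=
      (tendsto_aux (1-α) (1-β) hα1' hβ1').sub_const ((1-α) * Real.log (1-β))
    have := (hsum1.sub hα').sub hβ'
    have hval : D - (α * Real.log α - α * Real.log β)
        - ((1-α) * Real.log (1-α) - (1-α) * Real.log (1-β)) = D - binKL α β := by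
      rw [binKL, Real.log_div hα0.ne' hβ0.ne', Real.log_div hα1'.ne' hβ1'.ne']
      ring
    rw [hval] at this
    exact this
  have : 0 ≤ D - binKL α β :=
    ge_of_tendsto step2 ((eventually_ge_atTop (0:ℝ)).mono step1)
  linarith

section helpers
variable {n : Type*} [Fintype n] [DecidableEq n]

lemma trace_diag_mul_mul (p : n → ℂ) (A B : Matrix n n ℂ) :
    (Matrix.diagonal p * A * B).trace = ∑ i, ∑ j, p i * A i j * B j i := by
  simp [Matrix.trace, Matrix.diag, Matrix.mul_apply, Matrix.diagonal_apply, Finset.mul_sum,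
    Finset.sum_mul, mul_assoc]

lemma trace_diag (p : n → ℂ) : (Matrix.diagonal p).trace = ∑ i, p i := by
  simp [Matrix.trace, Matrix.diag]

lemma trace_spec_mul (U D B : Matrix n n ℂ) :
    (U * D * star U * B).trace = (D * (star U * B * U)).trace := by
  have h1 : U * D * star U * B = (U*D) * (star U * B) := by simp [Matrix.mul_assoc]
  rw [h1, Matrix.trace_mul_comm]
  have h2 : star U * B * (U * D) = (star U * B * U) * D := by simp [Matrix.mul_assoc]
  rw [h2, Matrix.trace_mul_comm]

lemma trace_conj {U : Matrix n n ℂ} (hU : star U * U = 1) (D : Matrix n n ℂ) :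
    (U * D * star U).trace = D.trace := by
  rw [Matrix.trace_mul_cycle, hU, Matrix.one_mul]

lemma trace_diag_psd_nonneg {M : Matrix n n ℂ} (hM : M.PosSemidef) :
    0 ≤ (M.trace).re := by
  have h : ∀ i, 0 ≤ (M i i).re := by
    intro i
    have := hM.re_dotProduct_nonneg (Pi.single i 1)
    simpa [dotProduct, Matrix.mulVec, Pi.single_apply, Finset.sum_ite_eq] using this
  rw [Matrix.trace, Complex.re_sum]
  exact Finset.sum_nonneg (fun i _ => h i)

open scoped MatrixOrder in
lemma psd_exists_sqrt {B : Matrix n n ℂ} (hB : B.PosSemidef) :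
    ∃ S : Matrix n n ℂ, S.PosSemidef ∧ S * S = B :=
  ⟨CFC.sqrt B, Matrix.nonneg_iff_posSemidef.mp (CFC.sqrt_nonneg B), CFC.sqrt_mul_sqrt_self B hB.nonneg⟩

lemma trace_mul_psd_nonneg {A B : Matrix n n ℂ} (hA : A.PosSemidef) (hB : B.PosSemidef) :
    0 ≤ ((A * B).trace).re := by
  obtain ⟨S, hS, hsq⟩ := psd_exists_sqrt hB
  have h1 : (S * A * S).trace = (A * B).trace := by
    rw [Matrix.trace_mul_cycle, hsq, Matrix.trace_mul_comm]
  rw [← h1]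
  have h2 : (S * A * S).PosSemidef := by
    have := hA.conjTranspose_mul_mul_same S
    rwa [hS.1.eq] at this
  exact trace_diag_psd_nonneg h2

lemma sq_ineq (p κ : ℝ) (hκ : 0 < κ) (z w : ℂ) :
    2 * ((p:ℂ) * (starRingEnd ℂ z) * w).re ≤ p^2 * Complex.normSq z / κ + κ * Complex.normSq w := by
  have h1 : ((p:ℂ) * (starRingEnd ℂ z) * w).re = p * (z.re * w.re + z.im * w.im) := by
    simp [Complex.mul_re, Complex.mul_im]
    ring
  rw [h1, Complex.normSq_apply, Complex.normSq_apply]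
  have h2 : p^2 * (z.re*z.re+z.im*z.im) / κ + κ*(w.re*w.re+w.im*w.im)
      - 2*(p*(z.re*w.re+z.im*w.im))
      = ((p*z.re - κ*w.re)^2 + (p*z.im - κ*w.im)^2)/κ := by
    field_simp
    ring
  have h3 : (0:ℝ) ≤ ((p*z.re - κ*w.re)^2 + (p*z.im - κ*w.im)^2)/κ := by positivity
  linarith

lemma psd_T_one_sub {T : Matrix n n ℂ} (hT0 : T.PosSemidef) (hT1 : (1 - T).PosSemidef) :
    (T * (1 - T)).PosSemidef := by
  obtain ⟨S, hS, hsq⟩ : ∃ S : Matrix n n ℂ, S.PosSemidef ∧ S * S = T :=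
    psd_exists_sqrt hT0
  have key : S * (1 - T) * S = T * (1 - T) := by
    have h1 : S * T * S = T * T := by
      rw [← hsq]
      simp only [Matrix.mul_assoc]
    calc S * (1-T) * S
        = S * S - S * T * S := by noncomm_ring
      _ = T * (1-T) := by rw [h1, hsq]; noncomm_ring
  have h2 := hT1.conjTranspose_mul_mul_same S
  rwa [hS.1.eq, key] at h2

lemma psd_smul_real {A : Matrix n n ℂ} (hA : A.PosSemidef) {c : ℝ} (hc : 0 ≤ c) :
    (((c:ℂ)) • A).PosSemidef := by
  constructor
  · have := hA.1
    simp [Matrix.IsHermitian, Matrix.conjTranspose_smul, this.eq, Complex.star_def,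
      Complex.conj_ofReal]
  · intro x
    have h := hA.2 x
    exact (hA.smul (a := (c:ℂ)) (by exact_mod_cast Complex.zero_le_real.mpr hc)).2 x

end helpers

lemma core {d : ℕ} (T U W : Matrix (Fin d) (Fin d) ℂ) (P Q : Fin d → ℝ)
    (ρ σ : Matrix (Fin d) (Fin d) ℂ)
    (hρspec : ρ = U * Matrix.diagonal (fun i => (P i : ℂ)) * star U)
    (hσspec : σ = W * Matrix.diagonal (fun j => (Q j : ℂ)) * star W)
    (hUu : star U * U = 1) (hUu' : U * star U = 1)
    (hWu : star W * W = 1) (hWu' : W * star W = 1)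
    (hPpos : ∀ i, 0 < P i) (hQpos : ∀ j, 0 < Q j)
    (hρtr : ρ.trace = 1) (hσtr : σ.trace = 1)
    (hρpsd : ρ.PosSemidef) (hσpsd : σ.PosSemidef)
    (hT0 : T.PosSemidef) (hT1 : (1 - T).PosSemidef)
    (hρT0 : 0 < ((ρ * T).trace).re) (hρT1 : ((ρ * T).trace).re < 1)
    (hσT0 : 0 < ((σ * T).trace).re) (hσT1 : ((σ * T).trace).re < 1)
    (scalar_main : ∀ {n : ℕ} (P Q : Fin n → ℝ) (w : Fin n → Fin n → ℝ) (α β : ℝ),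
      (∀ i, 0 < P i) → (∀ j, 0 < Q j) → (∀ i j, 0 ≤ w i j) →
      (∑ i, ∑ j, w i j * P i = 1) →
      0 < α → α < 1 → 0 < β → β < 1 →
      (∀ s : ℝ, 0 ≤ s →
        α^2/(β+s*α) + (1-α)^2/((1-β)+s*(1-α)) ≤ ∑ i, ∑ j, w i j * ((P i)^2 / (Q j + s * P i))) →
      binKL α β ≤ ∑ i, ∑ j, w i j * (P i * Real.log (P i) - P i * Real.log (Q j))) :
    binKL ((ρ * T).trace).re ((σ * T).trace).re ≤
      ∑ i, ∑ j, Complex.normSq ((star W * U) j i) *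
        (P i * Real.log (P i) - P i * Real.log (Q j)) := by
  set α : ℝ := ((ρ * T).trace).re with hαdef
  set β : ℝ := ((σ * T).trace).re with hβdef
  set C : Matrix (Fin d) (Fin d) ℂ := star W * U with hCdef
  set w : Fin d → Fin d → ℝ := fun i j => Complex.normSq (C j i) with hwdef
  have hCstar : star C = star U * W := by rw [hCdef, star_mul, star_star]
  -- row sums of w
  have hCu : star C * C = 1 := by
    rw [hCstar, hCdef]
    calc (star U * W) * (star W * U) = star U * ((W * star W) * U) := by
          simp [Matrix.mul_assoc]
      _ = 1 := by rw [hWu', Matrix.one_mul, hUu]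
  have hrow : ∀ i, ∑ j, w i j = 1 := by
    intro i
    have h1 : (star C * C) i i = 1 := by rw [hCu, Matrix.one_apply_eq]
    have h2 : (star C * C) i i = ((∑ j, w i j : ℝ) : ℂ) := by
      rw [Matrix.mul_apply]
      push_cast
      refine Finset.sum_congr rfl (fun j _ => ?_)
      rw [Matrix.star_apply, mul_comm, RCLike.star_def, Complex.mul_conj]
    rw [h2] at h1
    exact_mod_cast h1
  have hwpos : ∀ i j, 0 ≤ w i j := fun i j => Complex.normSq_nonneg _
  -- sum of eigenvalues of ρ is 1
  have hPsum : ∑ i, P i = 1 := by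
    have h1 : ρ.trace = ∑ i, (P i : ℂ) := by
      rw [hρspec, trace_conj hUu, trace_diag]
    have h2 : ((∑ i, P i : ℝ) : ℂ) = 1 := by
      push_cast
      rw [← h1, hρtr]
    exact_mod_cast h2
  -- linear trace computation
  have ltr : ∀ (ω : Matrix (Fin d) (Fin d) ℂ) (x y : ℝ),
      (ω * ((x:ℂ) • T + (y:ℂ) • (1 - T))).trace
        = (x:ℂ) * (ω*T).trace + (y:ℂ) * (ω.trace - (ω*T).trace) := by
    intro ω x y
    rw [mul_add, mul_smul_comm, mul_smul_comm, Matrix.trace_add, Matrix.trace_smul,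
      Matrix.trace_smul, mul_sub, mul_one, Matrix.trace_sub]
    simp [smul_eq_mul]
  -- the master inequality
  have master : ∀ a b s : ℝ, 0 ≤ s →
      2*(a*α + b*(1-α)) - (a^2*β + b^2*(1-β)) - s*(a^2*α + b^2*(1-α))
        ≤ ∑ i, ∑ j, w i j * ((P i)^2 / (Q j + s * P i)) := by
    intro a b s hs
    set G : Matrix (Fin d) (Fin d) ℂ := (a:ℂ) • T + (b:ℂ) • (1 - T) with hGdef
    set N : Matrix (Fin d) (Fin d) ℂ := star W * G * U with hNdef
    have hT1herm : (1 - T).IsHermitian := hT1.1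
    have hGstar : star G = G := by
      rw [hGdef]
      simp only [Matrix.star_eq_conjTranspose, Matrix.conjTranspose_add,
        Matrix.conjTranspose_smul, hT0.1.eq, hT1herm.eq, Complex.star_def,
        Complex.conj_ofReal]
    have hNstar : star N = star U * G * W := by
      rw [hNdef, star_mul, star_mul, star_star, hGstar, Matrix.mul_assoc]
    -- linear trace values
    have hTrρG : ((ρ*G).trace).re = a*α + b*(1-α) := by
      rw [hGdef, ltr ρ a b, hρtr]
      simp [Complex.add_re, Complex.re_ofReal_mul, Complex.sub_re, Complex.one_re, hαdef]
    have hTrσH : ((σ * (((a^2:ℝ):ℂ) • T + ((b^2:ℝ):ℂ) • (1 - T))).trace).re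
        = a^2*β + b^2*(1-β) := by
      rw [ltr σ (a^2) (b^2), hσtr, hβdef]
      simp only [Complex.add_re, ← Complex.ofReal_pow, Complex.re_ofReal_mul, Complex.sub_re,
        Complex.one_re]
    have hTrρH : ((ρ * (((a^2:ℝ):ℂ) • T + ((b^2:ℝ):ℂ) • (1 - T))).trace).re
        = a^2*α + b^2*(1-α) := by
      rw [ltr ρ (a^2) (b^2), hρtr, hαdef]
      simp only [Complex.add_re, ← Complex.ofReal_pow, Complex.re_ofReal_mul, Complex.sub_re,
        Complex.one_re]
    -- operator bound : H - G*G is PSD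
    have hHGG : ((((a^2:ℝ):ℂ) • T + ((b^2:ℝ):ℂ) • (1 - T)) - G * G).PosSemidef := by
      have hid : (((a^2:ℝ):ℂ) • T + ((b^2:ℝ):ℂ) • (1 - T)) - G * G
          = (((a-b)^2:ℝ):ℂ) • (T * (1 - T)) := by
        rw [hGdef]
        simp only [add_mul, mul_add, smul_mul_assoc, mul_smul_comm, smul_smul, mul_one, one_mul,
          sub_mul, mul_sub]
        push_cast
        module
      rw [hid]
      exact psd_smul_real (psd_T_one_sub hT0 hT1) (sq_nonneg _)
    have hσGG : ((σ*(G*G)).trace).re ≤ a^2*β + b^2*(1-β) := by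
      have h0 := trace_mul_psd_nonneg hσpsd hHGG
      rw [mul_sub, Matrix.trace_sub, Complex.sub_re] at h0
      linarith [hTrσH]
    have hρGG : ((ρ*(G*G)).trace).re ≤ a^2*α + b^2*(1-α) := by
      have h0 := trace_mul_psd_nonneg hρpsd hHGG
      rw [mul_sub, Matrix.trace_sub, Complex.sub_re] at h0
      linarith [hTrρH]
    -- coordinate identities
    have hcoordρG : (ρ*G).trace = ∑ i, ∑ j, (P i:ℂ) * (star C) i j * N j i := by
      rw [hρspec, trace_spec_mul]
      have h1 : star U * G * U = star C * N := by
        rw [hCstar, hNdef]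
        symm
        calc star U * W * (star W * G * U) = star U * ((W * star W) * (G * U)) := by
              simp [Matrix.mul_assoc]
          _ = star U * (G * U) := by rw [hWu', Matrix.one_mul]
          _ = star U * G * U := by rw [Matrix.mul_assoc]
      rw [h1, ← Matrix.mul_assoc, trace_diag_mul_mul]
    have hcoordσGG : (σ*(G*G)).trace = ∑ j, ∑ i, (Q j:ℂ) * N j i * (star N) i j := by
      rw [hσspec, trace_spec_mul]
      have h1 : star W * (G*G) * W = N * star N := by
        rw [hNstar, hNdef]
        calc star W * (G*G) * W = star W * G * ((U * star U) * (G * W)) := by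
              rw [hUu']
              simp [Matrix.mul_assoc]
          _ = star W * G * U * (star U * G * W) := by simp [Matrix.mul_assoc]
      rw [h1, ← Matrix.mul_assoc, trace_diag_mul_mul]
    have hcoordρGG : (ρ*(G*G)).trace = ∑ i, ∑ j, (P i:ℂ) * (star N) i j * N j i := by
      rw [hρspec, trace_spec_mul]
      have h1 : star U * (G*G) * U = star N * N := by
        rw [hNstar, hNdef]
        calc star U * (G*G) * U = star U * G * ((W * star W) * (G * U)) := by
              rw [hWu']
              simp [Matrix.mul_assoc]
          _ = star U * G * W * (star W * G * U) := by simp [Matrix.mul_assoc]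
      rw [h1, ← Matrix.mul_assoc, trace_diag_mul_mul]
    -- real versions
    have hre1 : ((ρ*G).trace).re
        = ∑ i, ∑ j, ((P i:ℂ) * (starRingEnd ℂ) (C j i) * N j i).re := by
      rw [hcoordρG, Complex.re_sum]
      refine Finset.sum_congr rfl (fun i _ => ?_)
      rw [Complex.re_sum]
      refine Finset.sum_congr rfl (fun j _ => ?_)
      rw [Matrix.star_apply, RCLike.star_def]
    have hre2 : ((σ*(G*G)).trace).re = ∑ i, ∑ j, Q j * Complex.normSq (N j i) := by
      rw [hcoordσGG, Complex.re_sum, Finset.sum_comm]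
      refine Finset.sum_congr rfl (fun i _ => ?_)
      rw [Complex.re_sum]
      refine Finset.sum_congr rfl (fun j _ => ?_)
      rw [Matrix.star_apply, RCLike.star_def, mul_assoc, Complex.mul_conj]
      rw [← Complex.ofReal_mul, Complex.ofReal_re]
    have hre3 : ((ρ*(G*G)).trace).re = ∑ i, ∑ j, P i * Complex.normSq (N j i) := by
      rw [hcoordρGG, Complex.re_sum]
      refine Finset.sum_congr rfl (fun i _ => ?_)
      rw [Complex.re_sum]
      refine Finset.sum_congr rfl (fun j _ => ?_)
      rw [Matrix.star_apply, RCLike.star_def, mul_comm ((P i : ℂ)) _, mul_assoc, mul_comm,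
        mul_assoc, Complex.mul_conj, ← Complex.ofReal_mul, Complex.ofReal_re]
    -- combine
    have hmid : 2*((ρ*G).trace).re - ((σ*(G*G)).trace).re - s*((ρ*(G*G)).trace).re
        ≤ ∑ i, ∑ j, w i j * ((P i)^2 / (Q j + s * P i)) := by
      rw [hre1, hre2, hre3]
      rw [Finset.mul_sum, Finset.mul_sum, ← Finset.sum_sub_distrib, ← Finset.sum_sub_distrib]
      refine Finset.sum_le_sum (fun i _ => ?_)
      rw [Finset.mul_sum, Finset.mul_sum, ← Finset.sum_sub_distrib, ← Finset.sum_sub_distrib]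
      refine Finset.sum_le_sum (fun j _ => ?_)
      have hκ : 0 < Q j + s * P i :=
        add_pos_of_pos_of_nonneg (hQpos j) (mul_nonneg hs (hPpos i).le)
      have hsq := sq_ineq (P i) (Q j + s * P i) hκ (C j i) (N j i)
      have e1 : w i j * ((P i)^2 / (Q j + s * P i))
          = (P i)^2 * Complex.normSq (C j i) / (Q j + s * P i) := by
        rw [hwdef]
        ring
      have e2 : (Q j + s * P i) * Complex.normSq (N j i)
          = Q j * Complex.normSq (N j i) + s * (P i * Complex.normSq (N j i)) := by ring
      linarith
    have h1 : s*((ρ*(G*G)).trace).re ≤ s*(a^2*α + b^2*(1-α)) :=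
      mul_le_mul_of_nonneg_left hρGG hs
    linarith [hTrρG, hσGG, hmid]
  -- choose optimal a b
  have final_key : ∀ s : ℝ, 0 ≤ s →
      α^2/(β+s*α) + (1-α)^2/((1-β)+s*(1-α))
        ≤ ∑ i, ∑ j, w i j * ((P i)^2 / (Q j + s * P i)) := by
    intro s hs
    have hd1 : 0 < β + s*α := add_pos_of_pos_of_nonneg hσT0 (mul_nonneg hs hρT0.le)
    have hd2 : 0 < (1-β) + s*(1-α) := by
      have : (0:ℝ) < 1 - β := by linarith
      have h2 : (0:ℝ) ≤ s*(1-α) := mul_nonneg hs (by linarith)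
      linarith
    have heq : α^2/(β+s*α) + (1-α)^2/((1-β)+s*(1-α))
        = 2*((α/(β+s*α))*α + ((1-α)/((1-β)+s*(1-α)))*(1-α))
          - ((α/(β+s*α))^2*β + ((1-α)/((1-β)+s*(1-α)))^2*(1-β))
          - s*((α/(β+s*α))^2*α + ((1-α)/((1-β)+s*(1-α)))^2*(1-α)) := by
      field_simp
      ring
    rw [heq]
    exact master (α/(β+s*α)) ((1-α)/((1-β)+s*(1-α))) s hs
  -- conclude via the scalar lemma
  have hwsum : ∑ i, ∑ j, w i j * P i = 1 := by
    have : ∀ i, ∑ j, w i j * P i = P i := by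
      intro i
      rw [← Finset.sum_mul, hrow i, one_mul]
    rw [Finset.sum_congr rfl (fun i _ => this i), hPsum]
  exact scalar_main P Q w α β hPpos hQpos hwpos hwsum hρT0 hρT1 hσT0 hσT1 final_key



/-- Monotonicity of quantum relative entropy under a two-outcome measurement: for
positive definite density matrices `ρ, σ` and a Hermitian `0 ≤ T ≤ I` with
`0 < Tr(ρT) < 1` and `0 < Tr(σT) < 1`, one has `d(Tr(ρT), Tr(σT)) ≤ D(ρ‖σ)`. -/
theorem binKL_measurement_le_qRelEnt (d : ℕ)
    (ρ σ T : Matrix (Fin d) (Fin d) ℂ)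
    (hρ : ρ.PosDef) (hρtr : ρ.trace = 1)
    (hσ : σ.PosDef) (hσtr : σ.trace = 1)
    (hTherm : T.IsHermitian) (hT0 : T.PosSemidef) (hT1 : (1 - T).PosSemidef)
    (hρT0 : 0 < ((ρ * T).trace).re) (hρT1 : ((ρ * T).trace).re < 1)
    (hσT0 : 0 < ((σ * T).trace).re) (hσT1 : ((σ * T).trace).re < 1) :
    binKL ((ρ * T).trace).re ((σ * T).trace).re ≤ qRelEnt ρ σ := by
  have hρH : ρ.IsHermitian := hρ.1
  have hσH : σ.IsHermitian := hσ.1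
  set U : Matrix (Fin d) (Fin d) ℂ := (hρH.eigenvectorUnitary : Matrix (Fin d) (Fin d) ℂ)
    with hUdef
  set W : Matrix (Fin d) (Fin d) ℂ := (hσH.eigenvectorUnitary : Matrix (Fin d) (Fin d) ℂ)
    with hWdef
  set P : Fin d → ℝ := hρH.eigenvalues with hPdef
  set Q : Fin d → ℝ := hσH.eigenvalues with hQdef
  have hρspec : ρ = U * Matrix.diagonal (fun i => (P i : ℂ)) * star U := by
    rw [hUdef, hPdef]
    simpa [Function.comp_def] using hρH.spectral_theorem
  have hσspec : σ = W * Matrix.diagonal (fun j => (Q j : ℂ)) * star W := by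
    rw [hWdef, hQdef]
    simpa [Function.comp_def] using hσH.spectral_theorem
  have hUu : star U * U = 1 := Matrix.mem_unitaryGroup_iff'.mp hρH.eigenvectorUnitary.2
  have hUu' : U * star U = 1 := Matrix.mem_unitaryGroup_iff.mp hρH.eigenvectorUnitary.2
  have hWu : star W * W = 1 := Matrix.mem_unitaryGroup_iff'.mp hσH.eigenvectorUnitary.2
  have hWu' : W * star W = 1 := Matrix.mem_unitaryGroup_iff.mp hσH.eigenvectorUnitary.2
  have hPpos : ∀ i, 0 < P i := fun i => hρ.eigenvalues_pos i
  have hQpos : ∀ j, 0 < Q j := fun j => hσ.eigenvalues_pos j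
  have hmain := core T U W P Q ρ σ hρspec hσspec hUu hUu' hWu hWu' hPpos hQpos hρtr hσtr
    hρ.posSemidef hσ.posSemidef hT0 hT1 hρT0 hρT1 hσT0 hσT1
    (fun {n} P Q w α β h1 h2 h3 h4 h5 h6 h7 h8 h9 =>
      scalar_main P Q w α β h1 h2 h3 h4 h5 h6 h7 h8 h9)
  -- compute qRelEnt
  have hlogρ : matLog ρ = U * Matrix.diagonal (fun i => (Real.log (P i) : ℂ)) * star U := by
    rw [matLog, dif_pos hρH]
  have hlogσ : matLog σ = W * Matrix.diagonal (fun j => (Real.log (Q j) : ℂ)) * star W := by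
    rw [matLog, dif_pos hσH]
  have hrow : ∀ i, ∑ j, Complex.normSq ((star W * U) j i) = 1 := by
    intro i
    have hCu : star (star W * U) * (star W * U) = 1 := by
      rw [star_mul, star_star]
      calc (star U * W) * (star W * U) = star U * ((W * star W) * U) := by
            simp [Matrix.mul_assoc]
        _ = 1 := by rw [hWu', Matrix.one_mul, hUu]
    have h1 : (star (star W * U) * (star W * U)) i i = 1 := by rw [hCu, Matrix.one_apply_eq]
    have h2 : (star (star W * U) * (star W * U)) i i
        = ((∑ j, Complex.normSq ((star W * U) j i) : ℝ) : ℂ) := by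
      rw [Matrix.mul_apply]
      push_cast
      refine Finset.sum_congr rfl (fun j _ => ?_)
      rw [Matrix.star_apply, mul_comm, RCLike.star_def, Complex.mul_conj]
    rw [h2] at h1
    exact_mod_cast h1
  have hq1 : ((ρ * matLog ρ).trace).re = ∑ i, P i * Real.log (P i) := by
    have e1 : ρ * matLog ρ = U * (Matrix.diagonal (fun i => (P i:ℂ))
        * Matrix.diagonal (fun i => (Real.log (P i):ℂ))) * star U := by
      rw [hlogρ, hρspec]
      calc (U * Matrix.diagonal (fun i => (P i:ℂ)) * star U)
            * (U * Matrix.diagonal (fun i => (Real.log (P i):ℂ)) * star U)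
          = U * (Matrix.diagonal (fun i => (P i:ℂ)) * ((star U * U)
              * (Matrix.diagonal (fun i => (Real.log (P i):ℂ)) * star U))) := by
            simp only [Matrix.mul_assoc]
        _ = U * (Matrix.diagonal (fun i => (P i:ℂ))
              * Matrix.diagonal (fun i => (Real.log (P i):ℂ))) * star U := by
            rw [hUu, Matrix.one_mul]
            simp only [Matrix.mul_assoc]
    rw [e1, trace_conj hUu, Matrix.diagonal_mul_diagonal, trace_diag, Complex.re_sum]
    refine Finset.sum_congr rfl (fun i _ => ?_)
    simp [← Complex.ofReal_mul]
  have hq2 : ((ρ * matLog σ).trace).re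
      = ∑ i, ∑ j, Complex.normSq ((star W * U) j i) * (P i * Real.log (Q j)) := by
    have inner : star U * (W * Matrix.diagonal (fun j => (Real.log (Q j):ℂ)) * star W) * U
        = (star (star W * U) * Matrix.diagonal (fun j => (Real.log (Q j):ℂ)))
          * (star W * U) := by
      rw [star_mul, star_star]
      simp only [Matrix.mul_assoc]
    have e1 : (ρ * matLog σ).trace
        = ((Matrix.diagonal (fun i => (P i:ℂ)))
            * ((star (star W * U)) * Matrix.diagonal (fun j => (Real.log (Q j):ℂ)))
            * (star W * U)).trace := by
      rw [hlogσ, hρspec, trace_spec_mul, inner, ← Matrix.mul_assoc]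
    rw [e1, trace_diag_mul_mul, Complex.re_sum]
    refine Finset.sum_congr rfl (fun i _ => ?_)
    rw [Complex.re_sum]
    refine Finset.sum_congr rfl (fun j _ => ?_)
    rw [Matrix.mul_diagonal, Matrix.star_apply, RCLike.star_def]
    have : (P i:ℂ) * ((starRingEnd ℂ) ((star W * U) j i) * (Real.log (Q j):ℂ))
        * (star W * U) j i
        = ((Complex.normSq ((star W * U) j i) * (P i * Real.log (Q j)) : ℝ) : ℂ) := by
      push_cast
      rw [show (P i:ℂ) * ((starRingEnd ℂ) ((star W * U) j i) * (Real.log (Q j):ℂ))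
          * (star W * U) j i
          = ((star W * U) j i * (starRingEnd ℂ) ((star W * U) j i))
            * ((P i:ℂ) * (Real.log (Q j):ℂ)) by ring, Complex.mul_conj]
    rw [this, Complex.ofReal_re]
  have hq : qRelEnt ρ σ = ∑ i, ∑ j, Complex.normSq ((star W * U) j i)
      * (P i * Real.log (P i) - P i * Real.log (Q j)) := by
    rw [qRelEnt, mul_sub, Matrix.trace_sub, Complex.sub_re, hq1, hq2]
    simp only [mul_sub, Finset.sum_sub_distrib]
    congr 1
    refine Finset.sum_congr rfl (fun i _ => ?_)
    rw [← Finset.sum_mul, hrow i, one_mul]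
  rw [hq]
  exact hmain
end

section
/- Let ρ and σ be positive definite density matrices on ℂ^d, and let r_1 ≥ r_2 ≥ … ≥ r_d > 0 and s_1 ≥ s_2 ≥ … ≥ s_d > 0 be their respective eigenvalues listed in decreasing order (with multiplicity). Then the infimum of D(ρ ‖ V σ V*) over all d×d unitary matrices V equals the classical divergence of the ordered spectra: inf_{V unitary} D(ρ ‖ V σ V*) = ∑_{i=1}^d r_i log(r_i/s_i), and the infimum is attained. -/
open scoped Matrix ComplexOrder

open Finset in
lemma abel_nonneg (n : ℕ) (r y : ℕ → ℝ)
    (hr : ∀ k, k + 1 < n → r (k+1) ≤ r k)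
    (htot : ∑ i ∈ range n, y i = 0)
    (hpart : ∀ k, k < n → 0 ≤ ∑ i ∈ range (k+1), y i) :
    0 ≤ ∑ i ∈ range n, r i * y i := by
  rcases n with _ | m
  · simp
  have hdecomp : ∀ i ∈ range (m+1), r i * y i
      = r m * y i + ∑ k ∈ Ico i m, ((r k - r (k+1)) * y i) := by
    intro i hi
    have h1 : ∑ k ∈ Ico i m, (r k - r (k+1)) = r i - r m := by
      rw [Finset.sum_Ico_eq_sub _ (Nat.lt_succ_iff.mp (mem_range.mp hi))]
      rw [Finset.sum_range_sub' r, Finset.sum_range_sub' r]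
      ring
    rw [← Finset.sum_mul, h1]; ring
  rw [Finset.sum_congr rfl hdecomp, Finset.sum_add_distrib, ← Finset.mul_sum, htot, mul_zero,
    zero_add]
  have hswap : ∑ i ∈ range (m+1), ∑ k ∈ Ico i m, ((r k - r (k+1)) * y i)
      = ∑ k ∈ range m, ∑ i ∈ range (k+1), ((r k - r (k+1)) * y i) := by
    have h2 : ∀ i ∈ range (m+1), ∑ k ∈ Ico i m, ((r k - r (k+1)) * y i)
        = ∑ k ∈ range m, if i ≤ k then (r k - r (k+1)) * y i else 0 := by
      intro i _
      rw [← Finset.sum_filter]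
      congr 1
      ext k
      simp only [mem_Ico, mem_filter, mem_range]
      omega
    rw [Finset.sum_congr rfl h2, Finset.sum_comm]
    refine Finset.sum_congr rfl fun k hk => ?_
    rw [← Finset.sum_filter]
    congr 1
    ext i
    simp only [mem_range] at hk ⊢
    simp only [mem_filter, mem_range]
    omega
  rw [hswap]
  refine Finset.sum_nonneg fun k hk => ?_
  rw [← Finset.mul_sum]
  have hk' := mem_range.mp hk
  exact mul_nonneg (by linarith [hr k (by omega)]) (hpart k (by omega))

open Finset in
lemma ds_bound (n : ℕ) (r c : ℕ → ℝ) (b : ℕ → ℕ → ℝ)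
    (hb0 : ∀ i j, 0 ≤ b i j)
    (hrow : ∀ i, i < n → ∑ j ∈ range n, b i j = 1)
    (hcol : ∀ j, j < n → ∑ i ∈ range n, b i j = 1)
    (hr : ∀ k, k + 1 < n → r (k+1) ≤ r k)
    (hc : ∀ k, k + 1 < n → c (k+1) ≤ c k) :
    ∑ i ∈ range n, ∑ j ∈ range n, r i * c j * b i j ≤ ∑ i ∈ range n, r i * c i := by
  have hcmono : ∀ i j : ℕ, i ≤ j → j < n → c j ≤ c i := by
    intro i j hij hj
    induction j with
    | zero => obtain rfl : i = 0 := by omega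
              exact le_refl _
    | succ m ih =>
      rcases Nat.lt_or_ge i (m+1) with h | h
      · exact le_trans (hc m hj) (ih (by omega) (by omega))
      · obtain rfl : i = m + 1 := by omega
        exact le_refl _
  set y : ℕ → ℝ := fun i => c i - ∑ j ∈ range n, b i j * c j with hy
  have key : 0 ≤ ∑ i ∈ range n, r i * y i := by
    refine abel_nonneg n r y hr ?_ ?_
    · -- total sum zero
      rw [Finset.sum_sub_distrib, Finset.sum_comm]
      have : ∀ j ∈ range n, ∑ i ∈ range n, b i j * c j = c j := by
        intro j hj
        rw [← Finset.sum_mul, hcol j (mem_range.mp hj), one_mul]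
      rw [Finset.sum_congr rfl this, sub_self]
    · -- partial sums nonneg
      intro k hk
      have hsub : range (k+1) ⊆ range n := Finset.range_subset_range.mpr (by omega)
      rw [Finset.sum_sub_distrib, sub_nonneg, Finset.sum_comm]
      set t : ℕ → ℝ := fun j => ∑ i ∈ range (k+1), b i j with hts
      have htc : ∀ j ∈ range n, ∑ i ∈ range (k+1), b i j * c j = t j * c j := by
        intro j _; rw [← Finset.sum_mul]
      rw [Finset.sum_congr rfl htc]
      have ht0 : ∀ j, 0 ≤ t j := fun j => Finset.sum_nonneg fun i _ => hb0 i j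
      have ht1 : ∀ j, j < n → t j ≤ 1 := by
        intro j hj
        calc t j ≤ ∑ i ∈ range n, b i j :=
              Finset.sum_le_sum_of_subset_of_nonneg hsub (fun i _ _ => hb0 i j)
          _ = 1 := hcol j hj
      have htsum : ∑ j ∈ range n, t j = (k+1 : ℝ) := by
        rw [hts]
        rw [Finset.sum_comm]
        have : ∀ i ∈ range (k+1), ∑ j ∈ range n, b i j = 1 := fun i hi =>
          hrow i (by have := mem_range.mp hi; omega)
        rw [Finset.sum_congr rfl this, Finset.sum_const, card_range, nsmul_eq_mul]
        push_cast; ring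
      -- split
      have hsplit : ∑ j ∈ range n, t j * c j
          = ∑ j ∈ range (k+1), t j * c j + ∑ j ∈ Ico (k+1) n, t j * c j := by
        rw [← Finset.sum_range_add_sum_Ico _ (by omega : k+1 ≤ n)]

      have h1 : ∑ j ∈ range (k+1), t j * c j
          ≤ ∑ j ∈ range (k+1), (c j + (t j - 1) * c k) := by
        refine Finset.sum_le_sum fun j hj => ?_
        have hjk := mem_range.mp hj
        have hcj : c k ≤ c j := hcmono j k (by omega) (by omega)
        have htj : t j - 1 ≤ 0 := by linarith [ht1 j (by omega)]
        nlinarith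
      have h2 : ∑ j ∈ Ico (k+1) n, t j * c j ≤ ∑ j ∈ Ico (k+1) n, t j * c k := by
        refine Finset.sum_le_sum fun j hj => ?_
        have hj' := Finset.mem_Ico.mp hj
        exact mul_le_mul_of_nonneg_left (hcmono k j (by omega) (by omega)) (ht0 j)
      have hA : ∑ j ∈ range (k+1), (c j + (t j - 1) * c k)
          = ∑ j ∈ range (k+1), c j + ((∑ j ∈ range (k+1), t j) - (k+1)) * c k := by
        rw [Finset.sum_add_distrib]
        congr 1
        rw [← Finset.sum_mul, Finset.sum_sub_distrib, Finset.sum_const, card_range,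
          nsmul_eq_mul]
        push_cast; ring
      have hB : ∑ j ∈ Ico (k+1) n, t j * c k = (∑ j ∈ Ico (k+1) n, t j) * c k :=
        (Finset.sum_mul _ _ _).symm
      have htsplit : ∑ j ∈ range (k+1), t j + ∑ j ∈ Ico (k+1) n, t j = (k+1 : ℝ) := by
        rw [← htsum,
          ← Finset.sum_range_add_sum_Ico _ (by omega : k+1 ≤ n)]

      calc ∑ j ∈ range n, t j * c j
          = ∑ j ∈ range (k+1), t j * c j + ∑ j ∈ Ico (k+1) n, t j * c j := hsplit
        _ ≤ (∑ j ∈ range (k+1), c j + ((∑ j ∈ range (k+1), t j) - (k+1)) * c k)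
            + (∑ j ∈ Ico (k+1) n, t j) * c k := by rw [← hA, ← hB]; exact add_le_add h1 h2
        _ = ∑ j ∈ range (k+1), c j
            + ((∑ j ∈ range (k+1), t j + ∑ j ∈ Ico (k+1) n, t j) - (k+1)) * c k := by ring
        _ = ∑ j ∈ range (k+1), c j := by rw [htsplit]; ring
  have hexp : ∑ i ∈ range n, r i * y i
      = ∑ i ∈ range n, r i * c i - ∑ i ∈ range n, ∑ j ∈ range n, r i * c j * b i j := by
    rw [hy]
    simp only [mul_sub, Finset.sum_sub_distrib]
    congr 1
    refine Finset.sum_congr rfl fun i _ => ?_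
    rw [Finset.mul_sum]
    exact Finset.sum_congr rfl fun j _ => by ring
  linarith [key, hexp.symm.le, hexp.le]

open Matrix

lemma unitary_conj_diag_congr {d : ℕ} (U V : Matrix.unitaryGroup (Fin d) ℂ)
    (f g : Fin d → ℝ) (F : ℝ → ℝ)
    (h : (U : Matrix (Fin d) (Fin d) ℂ) * Matrix.diagonal (fun i => (f i : ℂ)) *
        star (U : Matrix (Fin d) (Fin d) ℂ)
       = (V : Matrix (Fin d) (Fin d) ℂ) * Matrix.diagonal (fun i => (g i : ℂ)) *
        star (V : Matrix (Fin d) (Fin d) ℂ)) :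
    (U : Matrix (Fin d) (Fin d) ℂ) * Matrix.diagonal (fun i => (F (f i) : ℂ)) *
        star (U : Matrix (Fin d) (Fin d) ℂ)
      = (V : Matrix (Fin d) (Fin d) ℂ) * Matrix.diagonal (fun i => (F (g i) : ℂ)) *
        star (V : Matrix (Fin d) (Fin d) ℂ) := by
  set Um := (U : Matrix (Fin d) (Fin d) ℂ) with hUm
  set Vm := (V : Matrix (Fin d) (Fin d) ℂ) with hVm
  have hU1 : star Um * Um = 1 := Matrix.mem_unitaryGroup_iff'.mp U.2
  have hU2 : Um * star Um = 1 := Matrix.mem_unitaryGroup_iff.mp U.2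
  have hV1 : star Vm * Vm = 1 := Matrix.mem_unitaryGroup_iff'.mp V.2
  have hV2 : Vm * star Vm = 1 := Matrix.mem_unitaryGroup_iff.mp V.2
  have hmat : Matrix.diagonal (fun i => (f i : ℂ)) * (star Um * Vm)
      = (star Um * Vm) * Matrix.diagonal (fun i => (g i : ℂ)) := by
    calc Matrix.diagonal (fun i => (f i : ℂ)) * (star Um * Vm)
        = (star Um * Um) * Matrix.diagonal (fun i => (f i : ℂ)) * (star Um * Vm) := by
          rw [hU1, one_mul]
      _ = star Um * (Um * Matrix.diagonal (fun i => (f i : ℂ)) * star Um) * Vm := by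
          simp only [Matrix.mul_assoc]
      _ = star Um * (Vm * Matrix.diagonal (fun i => (g i : ℂ)) * star Vm) * Vm := by rw [h]
      _ = (star Um * Vm) * Matrix.diagonal (fun i => (g i : ℂ)) * (star Vm * Vm) := by
          simp only [Matrix.mul_assoc]
      _ = (star Um * Vm) * Matrix.diagonal (fun i => (g i : ℂ)) := by rw [hV1, mul_one]
  have hmat2 : Matrix.diagonal (fun i => (F (f i) : ℂ)) * (star Um * Vm)
      = (star Um * Vm) * Matrix.diagonal (fun i => (F (g i) : ℂ)) := by
    ext i j
    rw [Matrix.diagonal_mul, Matrix.mul_diagonal]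
    by_cases hij : (star Um * Vm) i j = 0
    · rw [hij]; ring
    · have h0 := congrFun (congrFun hmat i) j
      rw [Matrix.diagonal_mul, Matrix.mul_diagonal] at h0
      have hfg : f i = g j := by
        have : (f i : ℂ) = (g j : ℂ) := by
          have h1 : ((f i : ℂ) - (g j : ℂ)) * (star Um * Vm) i j = 0 := by
            rw [sub_mul, h0]; ring
          rcases mul_eq_zero.mp h1 with h2 | h2
          · exact sub_eq_zero.mp h2
          · exact absurd h2 hij
        exact_mod_cast this
      rw [hfg]; ring
  calc Um * Matrix.diagonal (fun i => (F (f i) : ℂ)) * star Um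
      = Um * (Matrix.diagonal (fun i => (F (f i) : ℂ)) * (star Um * Vm)) * star Vm := by
        rw [Matrix.mul_assoc, Matrix.mul_assoc, Matrix.mul_assoc,
          Matrix.mul_assoc (star Um) Vm (star Vm), hV2, Matrix.mul_one]
    _ = Um * ((star Um * Vm) * Matrix.diagonal (fun i => (F (g i) : ℂ))) * star Vm := by
        rw [hmat2]
    _ = (Um * star Um) * (Vm * Matrix.diagonal (fun i => (F (g i) : ℂ)) * star Vm) := by
        simp only [Matrix.mul_assoc]
    _ = Vm * Matrix.diagonal (fun i => (F (g i) : ℂ)) * star Vm := by rw [hU2, one_mul]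

lemma matLog_conj {d : ℕ} (V : Matrix.unitaryGroup (Fin d) ℂ) (e : Fin d → ℝ) :
    matLog ((V : Matrix (Fin d) (Fin d) ℂ) * Matrix.diagonal (fun i => (e i : ℂ)) *
        star (V : Matrix (Fin d) (Fin d) ℂ))
      = (V : Matrix (Fin d) (Fin d) ℂ) * Matrix.diagonal (fun i => (Real.log (e i) : ℂ)) *
        star (V : Matrix (Fin d) (Fin d) ℂ) := by
  have hD : (Matrix.diagonal (fun i => (e i : ℂ))).IsHermitian := by
    refine Matrix.isHermitian_diagonal_of_self_adjoint _ ?_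
    ext i
    simp [Pi.star_apply, Complex.star_def, Complex.conj_ofReal]
  have hA : ((V : Matrix (Fin d) (Fin d) ℂ) * Matrix.diagonal (fun i => (e i : ℂ)) *
      star (V : Matrix (Fin d) (Fin d) ℂ)).IsHermitian := by
    rw [Matrix.star_eq_conjTranspose]
    exact Matrix.isHermitian_mul_mul_conjTranspose _ hD
  rw [matLog, dif_pos hA]
  refine unitary_conj_diag_congr hA.eigenvectorUnitary V hA.eigenvalues e Real.log ?_
  have hspec := hA.spectral_theorem
  convert hspec.symm using 3
  simp [Unitary.conjStarAlgAut_apply, Function.comp_def]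

lemma trace_conj_diag_mul {d : ℕ} (U M : Matrix.unitaryGroup (Fin d) ℂ) (a b : Fin d → ℝ) :
    ((((U : Matrix (Fin d) (Fin d) ℂ) * Matrix.diagonal (fun i => (a i : ℂ)) *
        star (U : Matrix (Fin d) (Fin d) ℂ)) *
      ((M : Matrix (Fin d) (Fin d) ℂ) * Matrix.diagonal (fun i => (b i : ℂ)) *
        star (M : Matrix (Fin d) (Fin d) ℂ))).trace).re
    = ∑ i, ∑ j, a i * b j *
        Complex.normSq ((star (U : Matrix (Fin d) (Fin d) ℂ) * (M : Matrix (Fin d) (Fin d) ℂ)) i j) := by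
  set Um := (U : Matrix (Fin d) (Fin d) ℂ) with hUm
  set Mm := (M : Matrix (Fin d) (Fin d) ℂ) with hMm
  set B := star Um * Mm with hB
  have hstarB : star B = star Mm * Um := by rw [hB, StarMul.star_mul, star_star]
  have h1 : (Um * Matrix.diagonal (fun i => (a i : ℂ)) * star Um) *
      (Mm * Matrix.diagonal (fun i => (b i : ℂ)) * star Mm)
      = Um * (Matrix.diagonal (fun i => (a i : ℂ)) * B * Matrix.diagonal (fun i => (b i : ℂ)) *
          star B * star Um) := by
    have hU2 : Um * star Um = 1 := Matrix.mem_unitaryGroup_iff.mp U.2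
    rw [hstarB, hB]
    simp only [Matrix.mul_assoc]
    rw [hU2, Matrix.mul_one]
  rw [h1, Matrix.trace_mul_comm]
  have h2 : (Matrix.diagonal (fun i => (a i : ℂ)) * B * Matrix.diagonal (fun i => (b i : ℂ)) *
      star B * star Um) * Um
      = Matrix.diagonal (fun i => (a i : ℂ)) * (B * Matrix.diagonal (fun i => (b i : ℂ)) * star B) := by
    have hU1 : star Um * Um = 1 := Matrix.mem_unitaryGroup_iff'.mp U.2
    rw [Matrix.mul_assoc _ (star Um) Um, hU1, Matrix.mul_one]
    simp only [Matrix.mul_assoc]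
  rw [h2]
  have h3 : (Matrix.diagonal (fun i => (a i : ℂ)) *
      (B * Matrix.diagonal (fun i => (b i : ℂ)) * star B)).trace
      = ∑ i, ∑ j, (((a i * b j * Complex.normSq (B i j) : ℝ)) : ℂ) := by
    rw [Matrix.trace]
    refine Finset.sum_congr rfl fun i _ => ?_
    rw [Matrix.diag_apply, Matrix.diagonal_mul, Matrix.mul_apply]
    rw [Finset.mul_sum]
    refine Finset.sum_congr rfl fun j _ => ?_
    rw [Matrix.mul_apply]
    rw [Finset.sum_eq_single j]
    · rw [Matrix.diagonal_apply_eq, Matrix.star_apply, Complex.star_def]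
      have hc : B i j * (starRingEnd ℂ) (B i j) = (Complex.normSq (B i j) : ℂ) :=
        Complex.mul_conj (B i j)
      push_cast
      rw [← hc]
      ring
    · intro k _ hk
      rw [Matrix.diagonal_apply_ne _ hk, mul_zero]
    · intro h; exact absurd (Finset.mem_univ j) h
  rw [h3]
  rw [Complex.re_sum]
  refine Finset.sum_congr rfl fun i _ => ?_
  rw [Complex.re_sum]
  refine Finset.sum_congr rfl fun j _ => ?_
  rw [Complex.ofReal_re]

open Finset in
lemma ds_bound_fin {d : ℕ} (r c : Fin d → ℝ) (b : Fin d → Fin d → ℝ)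
    (hb0 : ∀ i j, 0 ≤ b i j)
    (hrow : ∀ i, ∑ j, b i j = 1)
    (hcol : ∀ j, ∑ i, b i j = 1)
    (hr : ∀ i j : Fin d, i ≤ j → r j ≤ r i)
    (hc : ∀ i j : Fin d, i ≤ j → c j ≤ c i) :
    ∑ i, ∑ j, r i * c j * b i j ≤ ∑ i, r i * c i := by
  set rn : ℕ → ℝ := fun k => if h : k < d then r ⟨k, h⟩ else 0 with hrn
  set cn : ℕ → ℝ := fun k => if h : k < d then c ⟨k, h⟩ else 0 with hcn
  set bn : ℕ → ℕ → ℝ := fun k l =>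
    if h : k < d ∧ l < d then b ⟨k, h.1⟩ ⟨l, h.2⟩ else 0 with hbn
  have hrnk : ∀ i : Fin d, rn (i : ℕ) = r i := by
    intro i; simp only [hrn, i.isLt, dif_pos, Fin.eta]
  have hcnk : ∀ i : Fin d, cn (i : ℕ) = c i := by
    intro i; simp only [hcn, i.isLt, dif_pos, Fin.eta]
  have hbnk : ∀ i j : Fin d, bn (i : ℕ) (j : ℕ) = b i j := by
    intro i j
    simp only [hbn]
    rw [dif_pos ⟨i.isLt, j.isLt⟩]
  have e1 : ∑ i, r i * c i = ∑ i ∈ range d, rn i * cn i := by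
    rw [← Fin.sum_univ_eq_sum_range (fun k => rn k * cn k) d]
    exact Finset.sum_congr rfl fun i _ => by rw [hrnk, hcnk]
  have e2 : ∑ i, ∑ j, r i * c j * b i j
      = ∑ i ∈ range d, ∑ j ∈ range d, rn i * cn j * bn i j := by
    rw [← Fin.sum_univ_eq_sum_range (fun k => ∑ j ∈ range d, rn k * cn j * bn k j) d]
    refine Finset.sum_congr rfl fun i _ => ?_
    rw [← Fin.sum_univ_eq_sum_range (fun l => rn (i:ℕ) * cn l * bn (i:ℕ) l) d]
    exact Finset.sum_congr rfl fun j _ => by rw [hrnk, hcnk, hbnk]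
  rw [e1, e2]
  refine ds_bound d rn cn bn ?_ ?_ ?_ ?_ ?_
  · intro i j
    simp only [hbn]
    split
    · exact hb0 _ _
    · exact le_refl 0
  · intro i hi
    rw [← Fin.sum_univ_eq_sum_range (fun l => bn i l) d]
    have : ∀ j : Fin d, bn i (j:ℕ) = b ⟨i, hi⟩ j := by
      intro j; simp only [hbn]; rw [dif_pos ⟨hi, j.isLt⟩]
    rw [Finset.sum_congr rfl fun j _ => this j]
    exact hrow ⟨i, hi⟩
  · intro j hj
    rw [← Fin.sum_univ_eq_sum_range (fun k => bn k j) d]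
    have : ∀ i : Fin d, bn (i:ℕ) j = b i ⟨j, hj⟩ := by
      intro i; simp only [hbn]; rw [dif_pos ⟨i.isLt, hj⟩]
    rw [Finset.sum_congr rfl fun i _ => this i]
    exact hcol ⟨j, hj⟩
  · intro k hk
    have h1 : k < d := by omega
    simp only [hrn]
    rw [dif_pos hk, dif_pos h1]
    exact hr ⟨k, h1⟩ ⟨k+1, hk⟩ (by simp [Fin.le_def])
  · intro k hk
    have h1 : k < d := by omega
    simp only [hcn]
    rw [dif_pos hk, dif_pos h1]
    exact hc ⟨k, h1⟩ ⟨k+1, hk⟩ (by simp [Fin.le_def])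

lemma sum_one_normSq {d : ℕ} (g : Fin d → Fin d → ℝ) :
    ∑ i, ∑ j, g i j * Complex.normSq ((1 : Matrix (Fin d) (Fin d) ℂ) i j) = ∑ i, g i i := by
  refine Finset.sum_congr rfl fun i _ => ?_
  rw [Finset.sum_eq_single i]
  · rw [Matrix.one_apply_eq, Complex.normSq_one, mul_one]
  · intro j _ hj
    rw [Matrix.one_apply_ne (Ne.symm hj), Complex.normSq_zero, mul_zero]
  · intro h; exact absurd (Finset.mem_univ i) h

lemma qRelEnt_formula {d : ℕ} (r s : Fin d → ℝ) (U W V : Matrix.unitaryGroup (Fin d) ℂ) :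
    qRelEnt
      ((U : Matrix (Fin d) (Fin d) ℂ) * Matrix.diagonal (fun i => (r i : ℂ)) *
        star (U : Matrix (Fin d) (Fin d) ℂ))
      ((V : Matrix (Fin d) (Fin d) ℂ) *
        ((W : Matrix (Fin d) (Fin d) ℂ) * Matrix.diagonal (fun i => (s i : ℂ)) *
          star (W : Matrix (Fin d) (Fin d) ℂ)) * star (V : Matrix (Fin d) (Fin d) ℂ))
    = ∑ i, r i * Real.log (r i)
      - ∑ i, ∑ j, r i * Real.log (s j) *
          Complex.normSq ((star (U : Matrix (Fin d) (Fin d) ℂ) *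
            ((V * W : Matrix.unitaryGroup (Fin d) ℂ) : Matrix (Fin d) (Fin d) ℂ)) i j) := by
  have hσ : (V : Matrix (Fin d) (Fin d) ℂ) *
        ((W : Matrix (Fin d) (Fin d) ℂ) * Matrix.diagonal (fun i => (s i : ℂ)) *
          star (W : Matrix (Fin d) (Fin d) ℂ)) * star (V : Matrix (Fin d) (Fin d) ℂ)
      = ((V * W : Matrix.unitaryGroup (Fin d) ℂ) : Matrix (Fin d) (Fin d) ℂ) *
          Matrix.diagonal (fun i => (s i : ℂ)) *
          star ((V * W : Matrix.unitaryGroup (Fin d) ℂ) : Matrix (Fin d) (Fin d) ℂ) := by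
    have hcoe : ((V * W : Matrix.unitaryGroup (Fin d) ℂ) : Matrix (Fin d) (Fin d) ℂ)
        = (V : Matrix (Fin d) (Fin d) ℂ) * (W : Matrix (Fin d) (Fin d) ℂ) := rfl
    rw [hcoe, StarMul.star_mul]
    simp only [Matrix.mul_assoc]
  rw [hσ, qRelEnt, matLog_conj, matLog_conj, mul_sub, Matrix.trace_sub, Complex.sub_re]
  rw [trace_conj_diag_mul U U r (fun i => Real.log (r i)),
    trace_conj_diag_mul U (V * W) r (fun i => Real.log (s i))]
  congr 1
  have hU1 : star (U : Matrix (Fin d) (Fin d) ℂ) * (U : Matrix (Fin d) (Fin d) ℂ) = 1 :=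
    Matrix.mem_unitaryGroup_iff'.mp U.2
  rw [hU1]
  exact sum_one_normSq (fun i j => r i * Real.log (r j))

/-- Let `ρ, σ` be positive definite density matrices on `ℂ^d` whose eigenvalues, listed
in decreasing order with multiplicity, are `r_1 ≥ … ≥ r_d > 0` and `s_1 ≥ … ≥ s_d > 0`
(witnessed by unitary diagonalizations).  Then the infimum of `D(ρ ‖ V σ V*)` over all
unitaries `V` is attained and equals `∑ i, r_i log (r_i / s_i)`. -/
theorem qRelEnt_unitary_orbit_isLeast (d : ℕ) (hd : 1 ≤ d)
    (ρ σ : Matrix (Fin d) (Fin d) ℂ)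
    (hρ : ρ.PosDef) (hρtr : ρ.trace = 1)
    (hσ : σ.PosDef) (hσtr : σ.trace = 1)
    (r s : Fin d → ℝ)
    (hr_mono : ∀ i j : Fin d, i ≤ j → r j ≤ r i)
    (hs_mono : ∀ i j : Fin d, i ≤ j → s j ≤ s i)
    (hr_pos : ∀ i, 0 < r i) (hs_pos : ∀ i, 0 < s i)
    (U W : Matrix.unitaryGroup (Fin d) ℂ)
    (hU : ρ = (U : Matrix (Fin d) (Fin d) ℂ) *
      Matrix.diagonal (fun i => (r i : ℂ)) * star (U : Matrix (Fin d) (Fin d) ℂ))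
    (hW : σ = (W : Matrix (Fin d) (Fin d) ℂ) *
      Matrix.diagonal (fun i => (s i : ℂ)) * star (W : Matrix (Fin d) (Fin d) ℂ)) :
    IsLeast {x : ℝ | ∃ V : Matrix.unitaryGroup (Fin d) ℂ,
        x = qRelEnt ρ ((V : Matrix (Fin d) (Fin d) ℂ) * σ *
          star (V : Matrix (Fin d) (Fin d) ℂ))}
      (∑ i, r i * Real.log (r i / s i)) := by
  have htarget : ∑ i, r i * Real.log (r i / s i)
      = ∑ i, r i * Real.log (r i) - ∑ i, r i * Real.log (s i) := by
    rw [← Finset.sum_sub_distrib]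
    refine Finset.sum_congr rfl fun i _ => ?_
    rw [Real.log_div (ne_of_gt (hr_pos i)) (ne_of_gt (hs_pos i))]
    ring
  constructor
  · -- membership: V₀ = U * W⁻¹
    refine ⟨U * W⁻¹, ?_⟩
    rw [hU, hW, qRelEnt_formula r s U W (U * W⁻¹)]
    have hUW : U * W⁻¹ * W = U := by group
    rw [hUW]
    have hU1 : star (U : Matrix (Fin d) (Fin d) ℂ) * (U : Matrix (Fin d) (Fin d) ℂ) = 1 :=
      Matrix.mem_unitaryGroup_iff'.mp U.2
    rw [hU1, sum_one_normSq (fun i j => r i * Real.log (s j)), htarget]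
  · -- lower bound
    rintro x ⟨V, rfl⟩
    rw [hU, hW, qRelEnt_formula r s U W V, htarget]
    set B := star (U : Matrix (Fin d) (Fin d) ℂ) *
      ((V * W : Matrix.unitaryGroup (Fin d) ℂ) : Matrix (Fin d) (Fin d) ℂ) with hB
    have hBmem : B ∈ Matrix.unitaryGroup (Fin d) ℂ :=
      mul_mem (Unitary.star_mem U.2) (V * W).2
    have hterm : ∀ (C : Matrix (Fin d) (Fin d) ℂ) (i j : Fin d),
        C i j * (star C) j i = ((Complex.normSq (C i j) : ℝ) : ℂ) := by
      intro C i j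
      rw [Matrix.star_apply, Complex.star_def, Complex.mul_conj]
    have hrow : ∀ i, ∑ j, Complex.normSq (B i j) = 1 := by
      intro i
      have hBB : B * star B = 1 := Matrix.mem_unitaryGroup_iff.mp hBmem
      have h := congrFun (congrFun hBB i) i
      rw [Matrix.mul_apply] at h
      rw [Finset.sum_congr rfl (fun j _ => hterm B i j), Matrix.one_apply_eq] at h
      have h2 := congrArg Complex.re h
      rw [Complex.re_sum] at h2
      simpa using h2
    have hcol : ∀ j, ∑ i, Complex.normSq (B i j) = 1 := by
      intro j
      have hBB : star B * B = 1 := Matrix.mem_unitaryGroup_iff'.mp hBmem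
      have h := congrFun (congrFun hBB j) j
      rw [Matrix.mul_apply] at h
      have hterm2 : ∀ i, (star B) j i * B i j = ((Complex.normSq (B i j) : ℝ) : ℂ) := by
        intro i
        rw [Matrix.star_apply, Complex.star_def, mul_comm, Complex.mul_conj]
      rw [Finset.sum_congr rfl (fun i _ => hterm2 i), Matrix.one_apply_eq] at h
      have h2 := congrArg Complex.re h
      rw [Complex.re_sum] at h2
      simpa using h2
    have hds := ds_bound_fin r (fun j => Real.log (s j)) (fun i j => Complex.normSq (B i j))
      (fun i j => Complex.normSq_nonneg _) hrow hcol hr_mono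
      (fun i j hij => (Real.log_le_log_iff (hs_pos j) (hs_pos i)).mpr (hs_mono i j hij))
    linarith
end

section
/- For θ ∈ ℝ let R(θ) be the 2×2 rotation matrix ((cos θ, −sin θ), (sin θ, cos θ)). Let t, s ∈ (0,1), θ_1, θ_2 ∈ ℝ, and set ρ := R(θ_1) diag(t, 1−t) R(θ_1)^T and σ := R(θ_2) diag(s, 1−s) R(θ_2)^T, with matrix logarithms log ρ = R(θ_1) diag(log t, log(1−t)) R(θ_1)^T and log σ = R(θ_2) diag(log s, log(1−s)) R(θ_2)^T. Then Tr(ρ (log ρ − log σ)) = cos^2(θ_1 − θ_2) · d(t, s) + sin^2(θ_1 − θ_2) · d(t, 1−s). -/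
open scoped Matrix

/-- The 2×2 rotation matrix `((cos θ, −sin θ), (sin θ, cos θ))`. -/
noncomputable def rot (θ : ℝ) : Matrix (Fin 2) (Fin 2) ℝ :=
  !![Real.cos θ, -Real.sin θ; Real.sin θ, Real.cos θ]

/-- For `ρ = R(θ₁) diag(t, 1−t) R(θ₁)ᵀ` and `σ = R(θ₂) diag(s, 1−s) R(θ₂)ᵀ` with
`t, s ∈ (0,1)`, and with `log ρ = R(θ₁) diag(log t, log(1−t)) R(θ₁)ᵀ`,
`log σ = R(θ₂) diag(log s, log(1−s)) R(θ₂)ᵀ`, one has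
`Tr(ρ (log ρ − log σ)) = cos²(θ₁−θ₂) d(t,s) + sin²(θ₁−θ₂) d(t,1−s)`. -/
theorem qubit_relEnt_rotation (t s θ₁ θ₂ : ℝ)
    (ht0 : 0 < t) (ht1 : t < 1) (hs0 : 0 < s) (hs1 : s < 1) :
    (rot θ₁ * Matrix.diagonal ![t, 1 - t] * (rot θ₁)ᵀ *
        (rot θ₁ * Matrix.diagonal ![Real.log t, Real.log (1 - t)] * (rot θ₁)ᵀ -
          rot θ₂ * Matrix.diagonal ![Real.log s, Real.log (1 - s)] * (rot θ₂)ᵀ)).trace =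
      Real.cos (θ₁ - θ₂) ^ 2 * binKL t s + Real.sin (θ₁ - θ₂) ^ 2 * binKL t (1 - s) := by
  have h1 := Real.sin_sq_add_cos_sq θ₁
  have h2 := Real.sin_sq_add_cos_sq θ₂
  have hs' : (1:ℝ) - s ≠ 0 := by linarith
  have ht' : (1:ℝ) - t ≠ 0 := by linarith
  simp only [rot, binKL, sub_sub_cancel, Matrix.trace_fin_two, Matrix.mul_apply,
    Fin.sum_univ_two, Matrix.transpose_apply, Matrix.cons_val', Matrix.cons_val_zero,
    Matrix.cons_val_one, Matrix.head_cons, Matrix.head_fin_const, Matrix.empty_val',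
    Matrix.cons_val_fin_one, Matrix.sub_apply, Real.cos_sub, Real.sin_sub,
    Real.log_div ht0.ne' hs0.ne', Real.log_div ht0.ne' hs',
    Real.log_div ht' hs', Real.log_div ht' hs0.ne']
  simp only [Matrix.diagonal_apply_eq, Matrix.diagonal_apply_ne, Fin.zero_eq_one_iff,
    Fin.one_eq_zero_iff, ne_eq, OfNat.ofNat_ne_one, not_false_eq_true,
    one_ne_zero]
  simp only [Matrix.cons_val_zero, Matrix.cons_val_one, Matrix.head_cons, Matrix.of_apply,
    Matrix.cons_val', Matrix.empty_val', Matrix.cons_val_fin_one, Matrix.head_fin_const]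
  linear_combination (t * Real.log t + (1 - t) * Real.log (1 - t)) *
    ((Real.sin θ₁ ^ 2 + Real.cos θ₁ ^ 2 - Real.sin θ₂ ^ 2 - Real.cos θ₂ ^ 2 + 1) * h1 - h2)
end

section
/- Let d ≥ 1 and let (n_1,…,n_d) ∈ ℕ^d be a Young index with d rows and n boxes (n_1 ≥ … ≥ n_d, ∑_i n_i = n, n ≥ 1). Then the Weyl dimension expression satisfies (n! / ∏_{i=1}^d (n_i + d − i)!) · ∏_{1 ≤ i < j ≤ d} (n_i − n_j + j − i) ≤ (n+d)^{d(d−1)/2} · exp(n · H(n_1/n, …, n_d/n)). -/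
/-- Weyl dimension bound: for a Young index `(n_1,…,n_d)` with `d` rows and `n ≥ 1` boxes,
`(n!/∏ i, (n_i + d − i)!) ∏_{i<j} (n_i − n_j + j − i)
  ≤ (n+d)^{d(d−1)/2} exp(n H(n_1/n,…,n_d/n))`,
the left-hand side being the dimension of the irreducible `S_n`-representation
associated with `(n_1,…,n_d)`.  (Indices `i` run over `Fin d`, so the 1-indexed
`n_i + d − i` becomes `f i + (d − 1 − i)`.) -/
theorem weyl_dim_le (d n : ℕ) (hd : 1 ≤ d) (hn : 1 ≤ n) (f : Fin d → ℕ)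
    (hmono : ∀ i j : Fin d, i ≤ j → f j ≤ f i) (hsum : ∑ i, f i = n) :
    ((n.factorial : ℝ) / ∏ i : Fin d, ((f i + (d - 1 - (i : ℕ))).factorial : ℝ)) *
        ∏ p ∈ Finset.univ.filter (fun p : Fin d × Fin d => p.1 < p.2),
          ((f p.1 : ℝ) - (f p.2 : ℝ) + ((p.2 : Fin d) : ℕ) - ((p.1 : Fin d) : ℕ)) ≤
      ((n : ℝ) + d) ^ (d * (d - 1) / 2) *
        Real.exp ((n : ℝ) * (-∑ i, ((f i : ℝ) / n) * Real.log ((f i : ℝ) / n))) := by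
  have hn0 : (0:ℝ) < n := by exact_mod_cast hn
  -- positivity of ∏ f i ^ f i
  have hppos : ∀ k : ℕ, 0 < k ^ k := by
    intro k; cases k with
    | zero => simp
    | succ m => exact pow_pos (Nat.succ_pos m) _
  have hProdPos : (0:ℝ) < ∏ i : Fin d, ((f i : ℝ)) ^ (f i) := by
    apply Finset.prod_pos; intro i _
    exact_mod_cast hppos (f i)
  -- the exponential equals n^n / ∏ f i ^ f i
  have hexp : Real.exp ((n : ℝ) * (-∑ i, ((f i : ℝ) / n) * Real.log ((f i : ℝ) / n)))
      = (n:ℝ) ^ n / ∏ i : Fin d, ((f i : ℝ)) ^ (f i) := by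
    have h1 : (n : ℝ) * (-∑ i, ((f i : ℝ) / n) * Real.log ((f i : ℝ) / n))
        = ∑ i, -((f i : ℝ) * Real.log ((f i : ℝ) / n)) := by
      rw [mul_neg, Finset.mul_sum, ← Finset.sum_neg_distrib]
      congr 1; ext i
      field_simp
    rw [h1, Real.exp_sum]
    have h2 : ∀ i : Fin d, Real.exp (-((f i : ℝ) * Real.log ((f i : ℝ) / n)))
        = (((f i : ℝ) / n) ^ (f i))⁻¹ := by
      intro i
      by_cases h : f i = 0
      · simp [h]
      · have hx : (0:ℝ) < (f i : ℝ) / n := by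
          apply div_pos _ hn0
          exact_mod_cast Nat.pos_of_ne_zero h
        rw [Real.exp_neg, Real.exp_nat_mul, Real.exp_log hx]
    simp_rw [h2]
    rw [Finset.prod_inv_distrib]
    simp_rw [div_pow]
    rw [Finset.prod_div_distrib, Finset.prod_pow_eq_pow_sum, hsum, inv_div]
  -- key multinomial bound in ℕ
  have hkey : Nat.multinomial Finset.univ f * ∏ i : Fin d, (f i) ^ (f i) ≤ n ^ n := by
    have hmem : f ∈ Finset.piAntidiag Finset.univ n := by
      rw [Finset.mem_piAntidiag]
      exact ⟨hsum, fun i _ => Finset.mem_univ i⟩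
    calc Nat.multinomial Finset.univ f * ∏ i : Fin d, (f i) ^ (f i)
        ≤ ∑ k ∈ Finset.piAntidiag Finset.univ n,
            Nat.multinomial Finset.univ k * ∏ i : Fin d, (f i) ^ (k i) :=
          Finset.single_le_sum
            (f := fun k => Nat.multinomial Finset.univ k * ∏ i : Fin d, (f i) ^ (k i))
            (fun _ _ => Nat.zero_le _) hmem
      _ = (∑ i, f i) ^ n := by
          rw [Finset.sum_pow_eq_sum_piAntidiag]; push_cast; rfl
      _ = n ^ n := by rw [hsum]
  -- the first factor is at most n^n / ∏ f i ^ f i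
  have hfacpos : (0:ℝ) < ∏ i : Fin d, ((f i).factorial : ℝ) := by
    apply Finset.prod_pos; intro i _; exact_mod_cast (f i).factorial_pos
  have hstep1 : ((n.factorial : ℝ) / ∏ i : Fin d, ((f i + (d - 1 - (i:ℕ))).factorial : ℝ))
      ≤ (n.factorial : ℝ) / ∏ i : Fin d, ((f i).factorial : ℝ) := by
    apply div_le_div_of_nonneg_left (by positivity) hfacpos
    apply Finset.prod_le_prod (fun i _ => by positivity)
    intro i _
    exact_mod_cast Nat.factorial_le (Nat.le_add_right _ _)
  have hstep2 : (n.factorial : ℝ) / ∏ i : Fin d, ((f i).factorial : ℝ)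
      = (Nat.multinomial Finset.univ f : ℝ) := by
    rw [div_eq_iff (ne_of_gt hfacpos)]
    have := Nat.multinomial_spec Finset.univ f
    rw [hsum] at this
    exact_mod_cast (by rw [mul_comm] at this; exact this.symm)
  have hstep3 : (Nat.multinomial Finset.univ f : ℝ)
      ≤ (n:ℝ) ^ n / ∏ i : Fin d, ((f i : ℝ)) ^ (f i) := by
    rw [le_div_iff₀ hProdPos]
    exact_mod_cast hkey
  have hA : ((n.factorial : ℝ) / ∏ i : Fin d, ((f i + (d - 1 - (i:ℕ))).factorial : ℝ))
      ≤ (n:ℝ) ^ n / ∏ i : Fin d, ((f i : ℝ)) ^ (f i) :=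
    le_trans (hstep1.trans_eq hstep2) hstep3
  -- cardinality of the set of pairs
  have hcard : (Finset.univ.filter (fun p : Fin d × Fin d => p.1 < p.2)).card
      = d * (d-1)/2 := by
    rw [Finset.card_filter, ← Finset.univ_product_univ, Finset.sum_product_right]
    have h1 : ∀ j : Fin d, (∑ i : Fin d, if i < j then (1:ℕ) else 0) = (j : ℕ) := by
      intro j
      rw [← Finset.card_filter]
      have : Finset.univ.filter (fun i : Fin d => i < j) = Finset.Iio j := by
        ext i; simp
      rw [this, Fin.card_Iio]
    simp_rw [h1]
    rw [Fin.sum_univ_eq_sum_range (fun i => i), Finset.sum_range_id]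
  -- bounds on each pair factor
  have hfle : ∀ i : Fin d, f i ≤ n := by
    intro i
    rw [← hsum]
    exact Finset.single_le_sum (fun _ _ => Nat.zero_le _) (Finset.mem_univ i)
  have hpairnn : ∀ p ∈ Finset.univ.filter (fun p : Fin d × Fin d => p.1 < p.2),
      (0:ℝ) ≤ (f p.1 : ℝ) - (f p.2 : ℝ) + ((p.2 : Fin d) : ℕ) - ((p.1 : Fin d) : ℕ) := by
    intro p hp
    rw [Finset.mem_filter] at hp
    have h1 : (f p.2 : ℝ) ≤ (f p.1 : ℝ) := by
      exact_mod_cast hmono p.1 p.2 (le_of_lt hp.2)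
    have h2 : ((p.1 : ℕ) : ℝ) ≤ ((p.2 : ℕ) : ℝ) := by
      exact_mod_cast le_of_lt hp.2
    linarith
  have hB : ∏ p ∈ Finset.univ.filter (fun p : Fin d × Fin d => p.1 < p.2),
      ((f p.1 : ℝ) - (f p.2 : ℝ) + ((p.2 : Fin d) : ℕ) - ((p.1 : Fin d) : ℕ))
      ≤ ((n:ℝ) + d) ^ (d * (d-1)/2) := by
    rw [← hcard, ← Finset.prod_const]
    apply Finset.prod_le_prod hpairnn
    intro p hp
    have h1 : (f p.1 : ℝ) ≤ n := by exact_mod_cast hfle p.1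
    have h2 : ((p.2 : ℕ) : ℝ) < d := by exact_mod_cast p.2.isLt
    have h3 : (0:ℝ) ≤ (f p.2 : ℝ) := by positivity
    have h4 : (0:ℝ) ≤ ((p.1 : ℕ) : ℝ) := by positivity
    linarith
  rw [hexp]
  have hBnn : (0:ℝ) ≤ ∏ p ∈ Finset.univ.filter (fun p : Fin d × Fin d => p.1 < p.2),
      ((f p.1 : ℝ) - (f p.2 : ℝ) + ((p.2 : Fin d) : ℕ) - ((p.1 : Fin d) : ℕ)) :=
    Finset.prod_nonneg hpairnn
  calc _ ≤ ((n:ℝ) ^ n / ∏ i : Fin d, ((f i : ℝ)) ^ (f i)) * (((n:ℝ) + d) ^ (d * (d-1)/2)) :=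
        mul_le_mul hA hB hBnn (by positivity)
    _ = _ := mul_comm _ _
end
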